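/- arXiv:2106.07952 — 2 statements merged into one kernel-verified Lean document; each statement's English description precedes it below -/
import Mathlib

section
/- For a Hermitian positive definite matrix B and Hermitian matrix A (both N×N), the minimum of the generalized Rayleigh quotient (vᴴAv)/(vᴴBv) over nonzero vectors v ∈ ℂᴺ is attained at an eigenvector of B⁻¹A corresponding to its minimum eigenvalue. -/
open Matrix
open scoped ComplexOrder

lemma rayleigh_lower {n : Type*} [Fintype n] [DecidableEq n]
    {C : Matrix n n ℂ} (hC : C.IsHermitian)
    (c : ℝ) (hc : ∀ i, c ≤ hC.eigenvalues i) (u : n → ℂ) :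
    c * (star u ⬝ᵥ u).re ≤ (star u ⬝ᵥ C *ᵥ u).re := by
  have hM : (C - (c : ℂ) • 1).PosSemidef := by
    have h1 : C - (c : ℂ) • 1 =
        (hC.eigenvectorUnitary : Matrix n n ℂ) *
          diagonal (fun i => ((hC.eigenvalues i - c : ℝ) : ℂ)) *
          star (hC.eigenvectorUnitary : Matrix n n ℂ) := by
      have hU : (hC.eigenvectorUnitary : Matrix n n ℂ) *
          star (hC.eigenvectorUnitary : Matrix n n ℂ) = 1 :=
        Matrix.mem_unitaryGroup_iff.mp hC.eigenvectorUnitary.2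
      have hd : (diagonal (fun i => ((hC.eigenvalues i - c : ℝ) : ℂ)) : Matrix n n ℂ)
          = diagonal (RCLike.ofReal ∘ hC.eigenvalues) - (c : ℂ) • 1 := by
        rw [← diagonal_one, ← diagonal_smul, diagonal_sub]
        funext i; push_cast; simp
      rw [hd, mul_sub, sub_mul, ← Unitary.conjStarAlgAut_apply (S := ℂ), ← hC.spectral_theorem]
      congr 1
      rw [mul_smul_comm, smul_mul_assoc, mul_one, hU]
    rw [h1]
    refine (Matrix.posSemidef_diagonal_iff.mpr ?_).mul_mul_conjTranspose_same _
    intro i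
    simpa using sub_nonneg.2 (hc i)
  have h2 := hM.dotProduct_mulVec_nonneg u
  have h3 : star u ⬝ᵥ (C - (c : ℂ) • 1) *ᵥ u
      = star u ⬝ᵥ C *ᵥ u - (c : ℂ) * (star u ⬝ᵥ u) := by
    rw [sub_mulVec, dotProduct_sub, smul_mulVec, one_mulVec, dotProduct_smul,
      smul_eq_mul]
  rw [h3] at h2
  have h4 : 0 ≤ (star u ⬝ᵥ C *ᵥ u - (c : ℂ) * (star u ⬝ᵥ u)).re := by
    rw [Complex.le_def] at h2; exact h2.1
  rw [Complex.sub_re, Complex.re_ofReal_mul] at h4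
  linarith

open scoped MatrixOrder in
lemma exists_sqrt_of_posDef {N : ℕ} {B : Matrix (Fin N) (Fin N) ℂ} (hB : B.PosDef) :
    ∃ S : Matrix (Fin N) (Fin N) ℂ, S * S = B ∧ S.PosSemidef :=
  ⟨CFC.sqrt B, CFC.sqrt_mul_sqrt_self B hB.posSemidef.nonneg, (CFC.sqrt_nonneg B).posSemidef⟩

/-- For a Hermitian positive definite `B` and Hermitian `A`, the generalized Rayleigh
quotient `(vᴴAv)/(vᴴBv)` over nonzero `v` attains its minimum at an eigenvector of
`B⁻¹A` corresponding to its minimum eigenvalue. -/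
theorem stmt0 {N : ℕ} (hN : 0 < N) (A B : Matrix (Fin N) (Fin N) ℂ)
    (hA : A.IsHermitian) (hB : B.PosDef) :
    ∃ (v : Fin N → ℂ) (μ : ℂ), v ≠ 0 ∧
      (B⁻¹ * A).mulVec v = μ • v ∧
      (∀ (lam : ℂ) (w : Fin N → ℂ), w ≠ 0 → (B⁻¹ * A).mulVec w = lam • w → μ.re ≤ lam.re) ∧
      (star v ⬝ᵥ A.mulVec v) / (star v ⬝ᵥ B.mulVec v) = μ ∧
      (∀ w : Fin N → ℂ, w ≠ 0 →
        μ.re ≤ ((star w ⬝ᵥ A.mulVec w) / (star w ⬝ᵥ B.mulVec w)).re) := by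
  haveI : Nonempty (Fin N) := Fin.pos_iff_nonempty.mp hN
  obtain ⟨S, hS2, hSps⟩ := exists_sqrt_of_posDef hB
  have hSH : S.IsHermitian := hSps.1
  -- S is invertible
  have hdetS : IsUnit S.det := by
    have h : S.det * S.det = B.det := by rw [← det_mul, hS2]
    have hBdet : B.det ≠ 0 := ne_of_gt hB.det_pos
    have : S.det ≠ 0 := fun h0 => hBdet (by rw [← h, h0, zero_mul])
    exact this.isUnit
  have hSi : S * S⁻¹ = 1 := mul_nonsing_inv S hdetS
  have hiS : S⁻¹ * S = 1 := nonsing_inv_mul S hdetS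
  have hSiH : S⁻¹.IsHermitian := hSH.inv
  -- the Hermitian matrix C = S⁻¹ A S⁻¹
  set C := S⁻¹ * A * S⁻¹ with hCdef
  have hC : C.IsHermitian := by
    show Cᴴ = C
    rw [hCdef, conjTranspose_mul, conjTranspose_mul, hSiH.eq, hA.eq, Matrix.mul_assoc]
  -- relations between B⁻¹A and C
  have hBinv : B⁻¹ = S⁻¹ * S⁻¹ := by rw [← hS2, Matrix.mul_inv_rev]
  have hBA : B⁻¹ * A = S⁻¹ * C * S := by
    rw [hBinv, hCdef]
    rw [Matrix.mul_assoc, Matrix.mul_assoc, Matrix.mul_assoc, hiS, Matrix.mul_one,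
      ← Matrix.mul_assoc]
  have hACS : A = S * C * S := by
    rw [hCdef]
    calc A = (S * S⁻¹) * A * (S⁻¹ * S) := by rw [hSi, hiS, Matrix.one_mul, Matrix.mul_one]
    _ = S * (S⁻¹ * A * S⁻¹) * S := by noncomm_ring
  -- congruence trick for Hermitian S
  have hdot : ∀ (x z : Fin N → ℂ), star x ⬝ᵥ S *ᵥ z = star (S *ᵥ x) ⬝ᵥ z := by
    intro x z
    rw [star_mulVec, hSH.eq, ← dotProduct_mulVec]
  -- minimal eigenvalue
  obtain ⟨i0, hi0⟩ := Finite.exists_min hC.eigenvalues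
  set μ' := hC.eigenvalues i0 with hμ'
  set u : Fin N → ℂ := ⇑(hC.eigenvectorBasis i0) with hudef
  have hu0 : u ≠ 0 := by
    have h := hC.eigenvectorBasis.orthonormal.ne_zero i0
    intro h0
    apply h
    ext i
    exact congrFun h0 i
  have hCu : C *ᵥ u = (μ' : ℂ) • u := by
    rw [hC.mulVec_eigenvectorBasis]
    exact RCLike.real_smul_eq_coe_smul (K := ℂ) _ _
  set v := S⁻¹ *ᵥ u with hvdef
  have hSv : S *ᵥ v = u := by rw [hvdef, mulVec_mulVec, hSi, one_mulVec]
  have hv0 : v ≠ 0 := by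
    intro h0
    apply hu0
    rw [← hSv, h0, mulVec_zero]
  refine ⟨v, (μ' : ℂ), hv0, ?_, ?_, ?_, ?_⟩
  · -- eigenvector equation
    rw [hBA, ← mulVec_mulVec, hSv, ← mulVec_mulVec, hCu, mulVec_smul]
  · -- min over eigenvalues of B⁻¹A
    intro lam w hw heq
    set y := S *ᵥ w with hydef
    have hy0 : y ≠ 0 := by
      intro h0
      apply hw
      have : S⁻¹ *ᵥ y = w := by rw [hydef, mulVec_mulVec, hiS, one_mulVec]
      rw [← this, h0, mulVec_zero]
    have hCy : C *ᵥ y = lam • y := by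
      have hCS : C * S = S * (B⁻¹ * A) := by
        rw [hBA, ← Matrix.mul_assoc, ← Matrix.mul_assoc, hSi, Matrix.one_mul]
      rw [hydef, mulVec_mulVec, hCS, ← mulVec_mulVec, heq, mulVec_smul]
    have hyy : 0 < star y ⬝ᵥ y := dotProduct_star_self_pos_iff.mpr hy0
    have hyt : 0 < (star y ⬝ᵥ y).re ∧ (star y ⬝ᵥ y).im = 0 := by
      rw [Complex.lt_def] at hyy
      exact ⟨by simpa using hyy.1, by simpa using hyy.2.symm⟩
    have hkey := rayleigh_lower hC μ' (fun i => hi0 i) y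
    have hre : (star y ⬝ᵥ C *ᵥ y).re = lam.re * (star y ⬝ᵥ y).re := by
      rw [hCy, dotProduct_smul, smul_eq_mul, Complex.mul_re, hyt.2, mul_zero, sub_zero]
    rw [hre] at hkey
    have := (mul_le_mul_iff_of_pos_right hyt.1).mp hkey
    simpa using this
  · -- Rayleigh quotient at v equals μ
    have hnum : star v ⬝ᵥ A *ᵥ v = (μ' : ℂ) * (star u ⬝ᵥ u) := by
      rw [hACS, ← mulVec_mulVec, ← mulVec_mulVec, hSv, hdot, hSv, hCu, dotProduct_smul,
        smul_eq_mul]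
    have hden : star v ⬝ᵥ B *ᵥ v = star u ⬝ᵥ u := by
      rw [← hS2, ← mulVec_mulVec, hSv, hdot, hSv]
    have huu : star u ⬝ᵥ u ≠ 0 := fun h => hu0 (dotProduct_star_self_eq_zero.mp h)
    rw [hnum, hden, mul_div_assoc, div_self huu, mul_one]
  · -- lower bound of the Rayleigh quotient
    intro w hw
    set y := S *ᵥ w with hydef
    have hy0 : y ≠ 0 := by
      intro h0
      apply hw
      have : S⁻¹ *ᵥ y = w := by rw [hydef, mulVec_mulVec, hiS, one_mulVec]
      rw [← this, h0, mulVec_zero]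
    have hnum : star w ⬝ᵥ A *ᵥ w = star y ⬝ᵥ C *ᵥ y := by
      rw [hACS, ← mulVec_mulVec, ← mulVec_mulVec, hdot, ← hydef]
    have hden : star w ⬝ᵥ B *ᵥ w = star y ⬝ᵥ y := by
      rw [← hS2, ← mulVec_mulVec, hdot, ← hydef]
    have hyy : 0 < star y ⬝ᵥ y := dotProduct_star_self_pos_iff.mpr hy0
    have hyt : 0 < (star y ⬝ᵥ y).re ∧ (star y ⬝ᵥ y).im = 0 := by
      rw [Complex.lt_def] at hyy
      exact ⟨by simpa using hyy.1, by simpa using hyy.2.symm⟩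
    set t : ℝ := (star y ⬝ᵥ y).re with htdef
    have hytre : star y ⬝ᵥ y = (t : ℂ) := by
      apply Complex.ext
      · simp [htdef]
      · simp [hyt.2]
    have hkey := rayleigh_lower hC μ' (fun i => hi0 i) y
    rw [hnum, hden, hytre]
    have : ((star y ⬝ᵥ C *ᵥ y) / (t : ℂ)).re = (star y ⬝ᵥ C *ᵥ y).re / t := by
      rw [Complex.div_ofReal_re]
    rw [this]
    rw [Complex.ofReal_re]
    rw [le_div_iff₀ hyt.1]
    exact hkey
end

section
/- If Σ_k = T_kᵀ ⊗ R_k and Σ_j = T_jᵀ ⊗ R_j are Kronecker-structured covariance matrices (with T_k, T_j ∈ ℂ^{M×M} and R_k, R_j ∈ ℂ^{N×N} Hermitian positive definite), then for all unit vectors v_k, v_j ∈ ℂᴺ the quantity δ(v_k, v_j) := tr(Φ_k(v_k) Φ_j(v_j)) / (tr(Φ_k(v_k)) tr(Φ_j(v_j))), where Φ_i(v_i) := ((I_M ⊗ v_iᴴ) Σ_i (I_M ⊗ v_i))ᵀ, equals tr(T_k T_j)/(tr(T_k) tr(T_j)), independent of v_k and v_j. -/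
open Matrix
open scoped ComplexOrder Kronecker

/-- The effective covariance matrix `Φ(v) = ((I_M ⊗ vᴴ) Σ (I_M ⊗ v))ᵀ`,
whose `(m,n)` entry is `vᴴ Σ_{nm} v` where `Σ_{nm}` is the `(n,m)` block of `Σ`. -/
noncomputable def effCov {M N : ℕ} (S : Matrix (Fin M × Fin N) (Fin M × Fin N) ℂ)
    (v : Fin N → ℂ) : Matrix (Fin M) (Fin M) ℂ :=
  Matrix.of fun m n => ∑ i, ∑ j, (starRingEnd ℂ) (v i) * S (n, i) (m, j) * v j

lemma effCov_kron {M N : ℕ} (T : Matrix (Fin M) (Fin M) ℂ)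
    (R : Matrix (Fin N) (Fin N) ℂ) (v : Fin N → ℂ) :
    effCov (Tᵀ ⊗ₖ R) v = (star v ⬝ᵥ R *ᵥ v) • T := by
  ext m n
  simp only [effCov, Matrix.of_apply, Matrix.kroneckerMap_apply, Matrix.transpose_apply,
    Matrix.smul_apply, smul_eq_mul, dotProduct, Matrix.mulVec, dotProduct, Pi.star_apply,
    Finset.mul_sum, Finset.sum_mul]
  apply Finset.sum_congr rfl; intro i _
  apply Finset.sum_congr rfl; intro j _
  rw [RCLike.star_def]; ring

/-- Under the Kronecker model `Σ_k = T_kᵀ ⊗ R_k`, `Σ_j = T_jᵀ ⊗ R_j`, the quantity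
`δ(v_k, v_j)` is independent of the unit vectors `v_k, v_j` and equals
`tr(T_k T_j)/(tr(T_k) tr(T_j))`. -/
theorem stmt2 {M N : ℕ}
    (Tk Tj : Matrix (Fin M) (Fin M) ℂ) (Rk Rj : Matrix (Fin N) (Fin N) ℂ)
    (hTk : Tk.PosDef) (hTj : Tj.PosDef) (hRk : Rk.PosDef) (hRj : Rj.PosDef)
    (vk vj : Fin N → ℂ) (hvk : ∑ i, ‖vk i‖ ^ 2 = 1) (hvj : ∑ i, ‖vj i‖ ^ 2 = 1) :
    (effCov (Tkᵀ ⊗ₖ Rk) vk * effCov (Tjᵀ ⊗ₖ Rj) vj).trace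
        / ((effCov (Tkᵀ ⊗ₖ Rk) vk).trace * (effCov (Tjᵀ ⊗ₖ Rj) vj).trace)
      = (Tk * Tj).trace / (Tk.trace * Tj.trace) := by
  have hvk0 : vk ≠ 0 := by
    intro h; rw [h] at hvk; simp at hvk
  have hvj0 : vj ≠ 0 := by
    intro h; rw [h] at hvj; simp at hvj
  set ck := star vk ⬝ᵥ Rk *ᵥ vk with hck
  set cj := star vj ⬝ᵥ Rj *ᵥ vj with hcj
  have hck0 : ck ≠ 0 := ne_of_gt (hRk.dotProduct_mulVec_pos hvk0)
  have hcj0 : cj ≠ 0 := ne_of_gt (hRj.dotProduct_mulVec_pos hvj0)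
  rw [effCov_kron, effCov_kron, ← hck, ← hcj]
  rw [Matrix.smul_mul, Matrix.mul_smul, Matrix.trace_smul, Matrix.trace_smul,
    Matrix.trace_smul, Matrix.trace_smul]
  simp only [smul_eq_mul]
  rw [show ck * (cj * (Tk * Tj).trace) = (ck * cj) * (Tk * Tj).trace by ring,
    show ck * Tk.trace * (cj * Tj.trace) = (ck * cj) * (Tk.trace * Tj.trace) by ring,
    mul_div_mul_left _ _ (mul_ne_zero hck0 hcj0)]
end
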